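/- arXiv:math/0411229 — 2 statements merged into one kernel-verified Lean document; each statement's English description precedes it below -/
import Mathlib

section
/- Let i and a be positive integers with a ≥ 3, and set b = (a_(i))^{-1}_{-1}. Then ((a-2)_(i))^{-1}_{-1} equals b, b-1, or b-2. -/
/-- `IsMacExp n i j f` says that `n = C(f i, i) + C(f (i-1), i-1) + ... + C(f j, j)`
is the `i`-binomial (Macaulay) expansion of `n`, i.e. `f i > f (i-1) > ... > f j ≥ j ≥ 1`. -/
def IsMacExp (n i j : ℕ) (f : ℕ → ℕ) : Prop :=
  1 ≤ j ∧ j ≤ i ∧ j ≤ f j ∧ (∀ k, j ≤ k → k < i → f k < f (k + 1)) ∧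
    n = ∑ k ∈ Finset.Icc j i, (f k).choose k

/-- The upper shift `(n_(i))^{+1}_{+1}` of an expansion. -/
def macUp (i j : ℕ) (f : ℕ → ℕ) : ℕ := ∑ k ∈ Finset.Icc j i, (f k + 1).choose (k + 1)

/-- The lower shift `(n_(i))^{-1}_{-1}` of an expansion. -/
def macDown (i j : ℕ) (f : ℕ → ℕ) : ℕ := ∑ k ∈ Finset.Icc j i, (f k - 1).choose (k - 1)

open Finset in
open Finset in
lemma sum_split_bot (j i : ℕ) (hj : j ≤ i) (g : ℕ → ℕ) :
    ∑ k ∈ Icc j i, g k = g j + ∑ k ∈ Icc (j+1) i, g k := by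
  rw [← Finset.Ioc_insert_left hj, Finset.sum_insert (by simp), Finset.Icc_add_one_left_eq_Ioc]

open Finset in
lemma sum_split_mid (j i : ℕ) (hj : j ≤ i) (g : ℕ → ℕ) :
    ∑ k ∈ Icc 1 i, g k = ∑ k ∈ Icc 1 j, g k + ∑ k ∈ Icc (j+1) i, g k := by
  rw [Finset.Icc_add_one_left_eq_Ioc, show (1:ℕ) = 0 + 1 from rfl, Finset.Icc_add_one_left_eq_Ioc, Finset.Icc_add_one_left_eq_Ioc]
  exact (Finset.sum_Ioc_consecutive _ (Nat.zero_le j) hj).symm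

lemma sum_id (r : ℕ) : ∀ p, (∑ k ∈ Finset.Icc 1 p, (r + k - 1).choose k) + 1 = (r + p).choose p := by
  intro p
  induction p with
  | zero => simp
  | succ p ih =>
    rw [Finset.sum_Icc_succ_top (show (1:ℕ) ≤ p + 1 by omega)]
    have h1 : r + (p+1) - 1 = r + p := by omega
    rw [h1, show r + (p+1) = (r+p)+1 from rfl]
    have pascal : ((r+p)+1).choose (p+1) = (r+p).choose p + (r+p).choose (p+1) :=
      Nat.choose_succ_succ _ _
    omega

lemma sum_id2 (r : ℕ) (hr : 1 ≤ r) : ∀ p, 1 ≤ p →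
    ∑ k ∈ Finset.Icc 1 p, (r + k - 2).choose (k - 1) = (r + p - 1).choose (p - 1) := by
  intro p hp
  induction p with
  | zero => omega
  | succ p ih =>
    by_cases hp0 : p = 0
    · subst hp0; simp
    · have hp1 : 1 ≤ p := by omega
      have ihp := ih hp1
      rw [Finset.sum_Icc_succ_top (show (1:ℕ) ≤ p + 1 by omega), ihp]
      have h1 : r + (p+1) - 2 = r + p - 1 := by omega
      rw [h1, show ((p+1) - 1 : ℕ) = p from rfl]
      have h3 : r + (p+1) - 1 = (r + p - 1) + 1 := by omega
      rw [h3]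
      have pascal : ((r+p-1)+1).choose ((p-1)+1)
          = (r+p-1).choose (p-1) + (r+p-1).choose ((p-1)+1) := Nat.choose_succ_succ _ _
      have h5 : (p-1)+1 = p := by omega
      rw [h5] at pascal
      omega

lemma mac_fk {n i j : ℕ} {f : ℕ → ℕ} (h : IsMacExp n i j f) :
    ∀ k, j ≤ k → k ≤ i → k ≤ f k := by
  obtain ⟨hj1, hji, hjf, hch, -⟩ := h
  intro k hk
  induction k, hk using Nat.le_induction with
  | base => intro _; exact hjf
  | succ m hm ih =>
    intro hmi
    have h1 := hch m hm (by omega)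
    have h2 := ih (by omega)
    omega

lemma mac_top_le {n i j : ℕ} {f : ℕ → ℕ} (h : IsMacExp n i j f) : (f i).choose i ≤ n := by
  obtain ⟨hj1, hji, hjf, hch, hsum⟩ := h
  rw [hsum]
  exact Finset.single_le_sum (f := fun k => (f k).choose k) (fun k _ => Nat.zero_le _) (Finset.mem_Icc.mpr ⟨hji, le_refl i⟩)

lemma mac_pos {n i j : ℕ} {f : ℕ → ℕ} (h : IsMacExp n i j f) : 1 ≤ n := by
  have h1 := mac_top_le h
  have h2 : i ≤ f i := mac_fk h i h.2.1 le_rfl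
  have h3 := Nat.choose_pos h2
  omega

lemma mac_bound : ∀ i n j (f : ℕ → ℕ), IsMacExp n i j f → n < (f i + 1).choose i := by
  intro i
  induction i with
  | zero => intro n j f h; exact absurd h.2.1 (by have := h.1; omega)
  | succ i ih =>
    intro n j f h
    obtain ⟨hj1, hji, hjf, hch, hsum⟩ := h
    by_cases hc : j = i + 1
    · subst hc
      rw [hsum, Finset.Icc_self, Finset.sum_singleton]
      have h1 : i + 1 ≤ f (i+1) := hjf
      have h2 : 0 < (f (i+1)).choose i := Nat.choose_pos (by omega)
      have pascal : (f (i+1) + 1).choose (i+1)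
          = (f (i+1)).choose i + (f (i+1)).choose (i+1) := Nat.choose_succ_succ _ _
      omega
    · have hji2 : j ≤ i := by omega
      have hrest : IsMacExp (∑ k ∈ Finset.Icc j i, (f k).choose k) i j f :=
        ⟨hj1, hji2, hjf, fun k hk hki => hch k hk (by omega), rfl⟩
      have ihb := ih _ j f hrest
      have hfi : f i < f (i+1) := hch i (by omega) (by omega)
      have hmono : (f i + 1).choose i ≤ (f (i+1)).choose i := Nat.choose_le_choose i (by omega)
      have hsum' : n = (∑ k ∈ Finset.Icc j i, (f k).choose k) + (f (i+1)).choose (i+1) := by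
        rw [hsum, Finset.sum_Icc_succ_top (by omega)]
      have pascal : (f (i+1) + 1).choose (i+1)
          = (f (i+1)).choose i + (f (i+1)).choose (i+1) := Nat.choose_succ_succ _ _
      omega

lemma mac_unique : ∀ i n j (f : ℕ → ℕ) j' (f' : ℕ → ℕ),
    IsMacExp n i j f → IsMacExp n i j' f' → macDown i j f = macDown i j' f' := by
  intro i
  induction i with
  | zero => intro n j f j' f' h _; exact absurd h.2.1 (by have := h.1; omega)
  | succ i ih =>
    intro n j f j' f' h h'
    have htop : f (i+1) = f' (i+1) := by
      have l1 := mac_top_le h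
      have l2 := mac_top_le h'
      have b1 := mac_bound _ _ _ _ h
      have b2 := mac_bound _ _ _ _ h'
      by_contra hne
      rcases Nat.lt_or_ge (f (i+1)) (f' (i+1)) with hlt | hge
      · have := Nat.choose_le_choose (i+1) (show f (i+1) + 1 ≤ f' (i+1) by omega); omega
      · have := Nat.choose_le_choose (i+1) (show f' (i+1) + 1 ≤ f (i+1) by omega); omega
    have hchoose : (f (i+1)).choose (i+1) = (f' (i+1)).choose (i+1) := by rw [htop]
    obtain ⟨hj1, hji, hjf, hch, hsum⟩ := h
    obtain ⟨hj1', hji', hjf', hch', hsum'⟩ := h'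
    by_cases hc : j = i + 1 <;> by_cases hc' : j' = i + 1
    · subst hc; subst hc'
      simp only [macDown, Finset.Icc_self, Finset.sum_singleton, htop]
    · -- j = i+1, j' ≤ i : contradiction
      exfalso
      subst hc
      rw [Finset.Icc_self, Finset.sum_singleton] at hsum
      have hji2' : j' ≤ i := by omega
      have hrest' : IsMacExp (∑ k ∈ Finset.Icc j' i, (f' k).choose k) i j' f' :=
        ⟨hj1', hji2', hjf', fun k hk hki => hch' k hk (by omega), rfl⟩
      have hp := mac_pos hrest'
      have hsum2' : n = (∑ k ∈ Finset.Icc j' i, (f' k).choose k) + (f' (i+1)).choose (i+1) := by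
        rw [hsum', Finset.sum_Icc_succ_top (by omega)]
      omega
    · exfalso
      subst hc'
      rw [Finset.Icc_self, Finset.sum_singleton] at hsum'
      have hji2 : j ≤ i := by omega
      have hrest : IsMacExp (∑ k ∈ Finset.Icc j i, (f k).choose k) i j f :=
        ⟨hj1, hji2, hjf, fun k hk hki => hch k hk (by omega), rfl⟩
      have hp := mac_pos hrest
      have hsum2 : n = (∑ k ∈ Finset.Icc j i, (f k).choose k) + (f (i+1)).choose (i+1) := by
        rw [hsum, Finset.sum_Icc_succ_top (by omega)]
      omega
    · have hji2 : j ≤ i := by omega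
      have hji2' : j' ≤ i := by omega
      have hrest : IsMacExp (∑ k ∈ Finset.Icc j i, (f k).choose k) i j f :=
        ⟨hj1, hji2, hjf, fun k hk hki => hch k hk (by omega), rfl⟩
      have hrest' : IsMacExp (∑ k ∈ Finset.Icc j' i, (f' k).choose k) i j' f' :=
        ⟨hj1', hji2', hjf', fun k hk hki => hch' k hk (by omega), rfl⟩
      have hsum2 : n = (∑ k ∈ Finset.Icc j i, (f k).choose k) + (f (i+1)).choose (i+1) := by
        rw [hsum, Finset.sum_Icc_succ_top (by omega)]
      have hsum2' : n = (∑ k ∈ Finset.Icc j' i, (f' k).choose k) + (f' (i+1)).choose (i+1) := by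
        rw [hsum', Finset.sum_Icc_succ_top (by omega)]
      have heqs : (∑ k ∈ Finset.Icc j i, (f k).choose k)
          = ∑ k ∈ Finset.Icc j' i, (f' k).choose k := by omega
      rw [heqs] at hrest
      have hmd := ih _ j f j' f' hrest hrest'
      unfold macDown at hmd ⊢
      rw [Finset.sum_Icc_succ_top (show j ≤ i + 1 by omega),
        Finset.sum_Icc_succ_top (show j' ≤ i + 1 by omega), hmd, htop]

lemma mac_step (n i j : ℕ) (f : ℕ → ℕ) (h : IsMacExp n i j f) (hn : 2 ≤ n) :
    ∃ j2 f2, IsMacExp (n - 1) i j2 f2 ∧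
      (macDown i j f = macDown i j2 f2 ∨ macDown i j f = macDown i j2 f2 + 1) := by
  obtain ⟨hj1, hji, hjf, hch, hsum⟩ := h
  by_cases hfj : f j = j
  · -- last term is C(j,j) = 1 : drop it
    have hjlt : j < i := by
      by_contra hge
      have hji2 : j = i := by omega
      subst hji2
      rw [Finset.Icc_self, Finset.sum_singleton, hfj, Nat.choose_self] at hsum
      omega
    refine ⟨j + 1, f, ⟨by omega, by omega, ?_, fun k hk hki => hch k (by omega) hki, ?_⟩,
      Or.inr ?_⟩
    · have := hch j le_rfl hjlt; omega
    · have hs : n = 1 + ∑ k ∈ Finset.Icc (j+1) i, (f k).choose k := by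
        rw [hsum, sum_split_bot j i (by omega), hfj, Nat.choose_self]
      omega
    · unfold macDown
      rw [sum_split_bot j i (by omega), hfj]
      have h1 : (j - 1).choose (j - 1) = 1 := Nat.choose_self _
      omega
  · -- f j ≥ j + 1 : expand last term
    have hfj1 : j + 1 ≤ f j := by omega
    set r := f j - j with hr
    have hr1 : 1 ≤ r := by omega
    refine ⟨1, fun k => if j < k then f k else f j - (j + 1 - k), ⟨le_rfl, by omega, ?_, ?_, ?_⟩,
      Or.inl ?_⟩
    · show 1 ≤ if j < 1 then f 1 else f j - (j + 1 - 1)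
      rw [if_neg (by omega)]; omega
    · intro k hk hki
      show (if j < k then f k else f j - (j+1-k)) < (if j < k + 1 then f (k+1) else f j - (j+1-(k+1)))
      rcases lt_trichotomy j k with h1 | h1 | h1
      · rw [if_pos h1, if_pos (by omega)]; exact hch k (by omega) hki
      · subst h1
        rw [if_neg (by omega), if_pos (by omega)]
        have := hch j le_rfl (by omega); omega
      · rw [if_neg (by omega), if_neg (by omega)]; omega
    · -- sum equals n - 1
      show n - 1 = ∑ k ∈ Finset.Icc 1 i, ((if j < k then f k else f j - (j + 1 - k))).choose k
      have hs1 := sum_split_mid j i hji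
        (fun k => ((if j < k then f k else f j - (j + 1 - k))).choose k)
      have hs2 : ∑ k ∈ Finset.Icc (j+1) i, ((if j < k then f k else f j - (j + 1 - k))).choose k
          = ∑ k ∈ Finset.Icc (j+1) i, (f k).choose k := by
        refine Finset.sum_congr rfl (fun k hk => ?_)
        rw [Finset.mem_Icc] at hk
        rw [if_pos (by omega)]
      have hs3 : ∑ k ∈ Finset.Icc 1 j, ((if j < k then f k else f j - (j + 1 - k))).choose k
          = ∑ k ∈ Finset.Icc 1 j, (r + k - 1).choose k := by
        refine Finset.sum_congr rfl (fun k hk => ?_)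
        rw [Finset.mem_Icc] at hk
        rw [if_neg (by omega), show f j - (j + 1 - k) = r + k - 1 by omega]
      have hid := sum_id r j
      rw [show r + j = f j by omega] at hid
      have hsplit : n = (f j).choose j + ∑ k ∈ Finset.Icc (j+1) i, (f k).choose k := by
        rw [hsum, sum_split_bot j i hji]
      have hcp : 1 ≤ (f j).choose j := Nat.choose_pos (by omega)
      omega
    · -- macDown preserved
      show (∑ k ∈ Finset.Icc j i, (f k - 1).choose (k - 1))
          = ∑ k ∈ Finset.Icc 1 i, ((if j < k then f k else f j - (j + 1 - k)) - 1).choose (k - 1)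
      have hs1 := sum_split_mid j i hji
        (fun k => ((if j < k then f k else f j - (j + 1 - k)) - 1).choose (k - 1))
      have hs2 : ∑ k ∈ Finset.Icc (j+1) i,
            ((if j < k then f k else f j - (j + 1 - k)) - 1).choose (k - 1)
          = ∑ k ∈ Finset.Icc (j+1) i, (f k - 1).choose (k - 1) := by
        refine Finset.sum_congr rfl (fun k hk => ?_)
        rw [Finset.mem_Icc] at hk
        rw [if_pos (by omega)]
      have hs3 : ∑ k ∈ Finset.Icc 1 j,
            ((if j < k then f k else f j - (j + 1 - k)) - 1).choose (k - 1)
          = ∑ k ∈ Finset.Icc 1 j, (r + k - 2).choose (k - 1) := by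
        refine Finset.sum_congr rfl (fun k hk => ?_)
        rw [Finset.mem_Icc] at hk
        rw [if_neg (by omega), show f j - (j + 1 - k) - 1 = r + k - 2 by omega]
      have hid := sum_id2 r hr1 j hj1
      rw [show r + j - 1 = f j - 1 by omega] at hid
      have hsplit := sum_split_bot j i hji (fun k => (f k - 1).choose (k - 1))
      omega

/-- If `b = (a_(i))^{-1}_{-1}`, then `((a-2)_(i))^{-1}_{-1}` equals `b`, `b - 1` or `b - 2`. -/
theorem stmt_3 (i a : ℕ) (hi : 1 ≤ i) (ha : 3 ≤ a)
    (j f j' f' : _) (h1 : IsMacExp a i j f) (h2 : IsMacExp (a - 2) i j' f') :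
    (macDown i j' f' : ℤ) = (macDown i j f : ℤ) ∨
      (macDown i j' f' : ℤ) = (macDown i j f : ℤ) - 1 ∨
        (macDown i j' f' : ℤ) = (macDown i j f : ℤ) - 2 := by
  obtain ⟨j1, f1, hm1, hd1⟩ := mac_step a i j f h1 (by omega)
  obtain ⟨j2, f2, hm2, hd2⟩ := mac_step (a - 1) i j1 f1 hm1 (by omega)
  rw [show a - 1 - 1 = a - 2 by omega] at hm2
  have he := mac_unique i (a - 2) j' f' j2 f2 h2 hm2
  rcases hd1 with hd1 | hd1 <;> rcases hd2 with hd2 | hd2 <;> omega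
end

section
/- Let h = (1, h_1, ..., h_e) with h_e > 0 be defined from a tuple of non-negative integers s = (0, s_1, ..., s_e) with s_e > 0 by h_e = s_e and h_i = ((h_{i+1})_(i+1))^{-1}_{-1} + s_i for i = e-1, ..., 1. Then h is an O-sequence, i.e. h_{d+1} ≤ ((h_d)_(d))^{+1}_{+1} for all 1 ≤ d ≤ e-1 (where h_0 = 1 and h_1 > 0 provided some s_i > 0 or e ≥ 1). -/
/-- A weak Macaulay-type expansion, allowing the lowest index `j` to be `0`. -/
def MacExp' (n i j : ℕ) (f : ℕ → ℕ) : Prop :=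
  j ≤ i ∧ (∀ k, j ≤ k → k ≤ i → k ≤ f k) ∧ (∀ k, j ≤ k → k < i → f k < f (k + 1)) ∧
    n = ∑ k ∈ Finset.Icc j i, (f k).choose k

lemma isMacExp_exp {n i j : ℕ} {f : ℕ → ℕ} (h : IsMacExp n i j f) : MacExp' n i j f := by
  obtain ⟨hj1, hji, hjf, hmono, hn⟩ := h
  refine ⟨hji, ?_, hmono, hn⟩
  have key : ∀ k, j ≤ k → (k ≤ i → k ≤ f k) := by
    intro k hk
    induction k, hk using Nat.le_induction with
    | base => intro _; exact hjf
    | succ k hk ihh =>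
        intro hki
        have h1 := hmono k hk (by omega)
        have h2 := ihh (by omega)
        omega
  exact fun k hk1 hk2 => key k hk1 hk2

lemma exp_top_le {n i j : ℕ} {f : ℕ → ℕ} (h : MacExp' n i j f) : (f i).choose i ≤ n := by
  rw [h.2.2.2]
  exact Finset.single_le_sum (f := fun k => (f k).choose k) (fun k _ => Nat.zero_le _)
    (Finset.mem_Icc.mpr ⟨h.1, le_rfl⟩)

lemma exp_pos {n i j : ℕ} {f : ℕ → ℕ} (h : MacExp' n i j f) : 1 ≤ n := by
  have h1 : 0 < (f i).choose i := Nat.choose_pos (h.2.1 i h.1 le_rfl)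
  have := exp_top_le h
  omega

lemma exp_tail {n i j : ℕ} {f : ℕ → ℕ} (h : MacExp' n (i + 1) j f) (hji : j ≤ i) :
    MacExp' (∑ k ∈ Finset.Icc j i, (f k).choose k) i j f ∧
      n = (∑ k ∈ Finset.Icc j i, (f k).choose k) + (f (i + 1)).choose (i + 1) := by
  obtain ⟨hj, hkf, hmono, hn⟩ := h
  rw [Finset.sum_Icc_succ_top (by omega : j ≤ i + 1)] at hn
  exact ⟨⟨hji, fun k hk1 hk2 => hkf k hk1 (by omega),
    fun k hk1 hk2 => hmono k hk1 (by omega), rfl⟩, hn⟩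

lemma exp_self {n i : ℕ} {f : ℕ → ℕ} (h : MacExp' n i i f) : n = (f i).choose i := by
  rw [h.2.2.2, Finset.Icc_self, Finset.sum_singleton]

lemma macUp_succ {i j : ℕ} (f : ℕ → ℕ) (hji : j ≤ i) :
    macUp (i + 1) j f = macUp i j f + (f (i + 1) + 1).choose (i + 2) := by
  unfold macUp
  rw [Finset.sum_Icc_succ_top (by omega : j ≤ i + 1)]

lemma macUp_self (i : ℕ) (f : ℕ → ℕ) : macUp i i f = (f i + 1).choose (i + 1) := by
  unfold macUp
  rw [Finset.Icc_self, Finset.sum_singleton]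

lemma macUp_top_le {i j : ℕ} (f : ℕ → ℕ) (hji : j ≤ i) :
    (f i + 1).choose (i + 1) ≤ macUp i j f :=
  Finset.single_le_sum (f := fun k => (f k + 1).choose (k + 1)) (fun k _ => Nat.zero_le _)
    (Finset.mem_Icc.mpr ⟨hji, le_rfl⟩)

lemma exp_lt {n i j : ℕ} {f : ℕ → ℕ} (h : MacExp' n i j f) (hj : 1 ≤ j) :
    n < (f i + 1).choose i := by
  induction i generalizing n with
  | zero => exact absurd h.1 (by omega)
  | succ i ih =>
    have h4 : (f (i + 1) + 1).choose (i + 1)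
        = (f (i + 1)).choose i + (f (i + 1)).choose (i + 1) := Nat.choose_succ_succ _ _
    by_cases hcase : j = i + 1
    · have h' : MacExp' n (i + 1) (i + 1) f := hcase ▸ h
      have hn := exp_self h'
      have hfj : i + 1 ≤ f (i + 1) := h'.2.1 (i + 1) le_rfl le_rfl
      have hp : 0 < (f (i + 1)).choose i := Nat.choose_pos (by omega)
      omega
    · have hji : j ≤ i := by have := h.1; omega
      obtain ⟨htail, hn⟩ := exp_tail h hji
      have h1 := ih htail
      have h2 : f i < f (i + 1) := h.2.2.1 i hji (by omega)
      have h3 : (f i + 1).choose i ≤ (f (i + 1)).choose i :=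
        Nat.choose_le_choose _ (by omega)
      omega

lemma up_le {n i j : ℕ} {f : ℕ → ℕ} (h : MacExp' n i j f) :
    macUp i j f ≤ (f i + 2).choose (i + 1) := by
  induction i generalizing n with
  | zero =>
    have hj : j = 0 := by have := h.1; omega
    subst hj
    rw [macUp_self]
    exact Nat.choose_le_choose _ (by omega)
  | succ i ih =>
    by_cases hcase : j = i + 1
    · subst hcase
      rw [macUp_self]
      exact Nat.choose_le_choose _ (by omega)
    · have hji : j ≤ i := by have := h.1; omega
      obtain ⟨htail, hn⟩ := exp_tail h hji
      have h1 := ih htail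
      have h2 : f i < f (i + 1) := h.2.2.1 i hji (by omega)
      have h3 : (f i + 2).choose (i + 1) ≤ (f (i + 1) + 1).choose (i + 1) :=
        Nat.choose_le_choose _ (by omega)
      have h4 : (f (i + 1) + 2).choose (i + 2)
          = (f (i + 1) + 1).choose (i + 1) + (f (i + 1) + 1).choose (i + 2) :=
        Nat.choose_succ_succ _ _
      show macUp (i + 1) j f ≤ (f (i + 1) + 2).choose (i + 2)
      rw [macUp_succ f hji]
      omega

lemma mono_up {i j₀ j : ℕ} {g f : ℕ → ℕ} : ∀ {n m : ℕ},
    MacExp' n i j₀ g → MacExp' m i j f → 1 ≤ j → n ≤ m → macUp i j₀ g ≤ macUp i j f := by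
  induction i with
  | zero => intro n m _ hf hj _; exact absurd hf.1 (by omega)
  | succ i ih =>
    intro n m hg hf hj hnm
    rcases lt_trichotomy (g (i + 1)) (f (i + 1)) with hab | hab | hab
    · calc macUp (i + 1) j₀ g ≤ (g (i + 1) + 2).choose (i + 2) := up_le hg
        _ ≤ (f (i + 1) + 1).choose (i + 2) := Nat.choose_le_choose _ (by omega)
        _ ≤ macUp (i + 1) j f := macUp_top_le f hf.1
    · by_cases hjtop : j₀ = i + 1
      · subst hjtop
        rw [macUp_self, hab]
        exact macUp_top_le f hf.1
      · have hj₀ : j₀ ≤ i := by have := hg.1; omega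
        obtain ⟨hgtail, hng⟩ := exp_tail hg hj₀
        by_cases hjtop' : j = i + 1
        · exfalso
          subst hjtop'
          have hm := exp_self hf
          have h1 := exp_pos hgtail
          rw [hab] at hng
          omega
        · have hjf : j ≤ i := by have := hf.1; omega
          obtain ⟨hftail, hmf⟩ := exp_tail hf hjf
          have hle : (∑ k ∈ Finset.Icc j₀ i, (g k).choose k)
              ≤ ∑ k ∈ Finset.Icc j i, (f k).choose k := by
            rw [hab] at hng; omega
          have := ih hgtail hftail hj hle
          rw [macUp_succ g hj₀, macUp_succ f hjf, hab]
          omega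
    · exfalso
      have h1 : m < (f (i + 1) + 1).choose (i + 1) := exp_lt hf hj
      have h2 : (f (i + 1) + 1).choose (i + 1) ≤ (g (i + 1)).choose (i + 1) :=
        Nat.choose_le_choose _ (by omega)
      have h3 := exp_top_le hg
      omega

lemma succ_le_choose (n : ℕ) : ∀ k, 1 ≤ k → n + 1 ≤ (n + k).choose k := by
  intro k
  induction k with
  | zero => omega
  | succ k ih =>
    intro _
    by_cases hk : k = 0
    · subst hk; simp
    · have h1 := ih (by omega)
      have h2 : (n + (k + 1)).choose (k + 1) = (n + k).choose k + (n + k).choose (k + 1) := by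
        have : n + (k + 1) = (n + k) + 1 := by omega
        rw [this, Nat.choose_succ_succ]
      omega

lemma exists_greatest_choose (i n : ℕ) (hn : 1 ≤ n) :
    ∃ a, i + 1 ≤ a ∧ a.choose (i + 1) ≤ n ∧ ¬ (a + 1).choose (i + 1) ≤ n := by
  have hP : Nat.choose (i + 1) (i + 1) ≤ n := by simpa using hn
  refine ⟨Nat.findGreatest (fun t => Nat.choose t (i + 1) ≤ n) (n + i + 1), ?_, ?_, ?_⟩
  · exact Nat.le_findGreatest (P := fun t => Nat.choose t (i + 1) ≤ n) (by omega) hP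
  · exact Nat.findGreatest_spec (P := fun t => Nat.choose t (i + 1) ≤ n)
      (m := i + 1) (by omega) hP
  · have hbig : ¬ (Nat.choose (n + i + 1) (i + 1) ≤ n) := by
      have := succ_le_choose n (i + 1) (by omega)
      have heq : n + (i + 1) = n + i + 1 := by omega
      rw [heq] at this
      omega
    have hbound : Nat.findGreatest (fun t => Nat.choose t (i + 1) ≤ n) (n + i + 1) ≤ n + i + 1 :=
      Nat.findGreatest_le _
    have hne : Nat.findGreatest (fun t => Nat.choose t (i + 1) ≤ n) (n + i + 1) ≠ n + i + 1 := by
      intro heq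
      have hspec : Nat.choose (Nat.findGreatest (fun t => Nat.choose t (i + 1) ≤ n)
          (n + i + 1)) (i + 1) ≤ n :=
        Nat.findGreatest_spec (P := fun t => Nat.choose t (i + 1) ≤ n) (m := i + 1)
          (by omega) hP
      rw [heq] at hspec
      exact hbig hspec
    exact Nat.findGreatest_is_greatest (P := fun t => Nat.choose t (i + 1) ≤ n)
      (Nat.lt_succ_self _) (by omega)

lemma exists_mac : ∀ i, 1 ≤ i → ∀ n, 1 ≤ n → ∃ j f, IsMacExp n i j f := by
  intro i
  induction i with
  | zero => omega
  | succ i ih =>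
    intro _ n hn
    by_cases hi : i = 0
    · subst hi
      refine ⟨1, fun _ => n, le_rfl, le_rfl, hn, fun k h1 h2 => absurd h2 (by omega), ?_⟩
      simp [Finset.Icc_self]
    · have hi1 : 1 ≤ i := by omega
      obtain ⟨a, ha1, ha2, ha4⟩ := exists_greatest_choose i n hn
      have hpas : (a + 1).choose (i + 1) = a.choose i + a.choose (i + 1) :=
        Nat.choose_succ_succ _ _
      have hr : n - a.choose (i + 1) < a.choose i := by omega
      by_cases hr0 : n - a.choose (i + 1) = 0
      · refine ⟨i + 1, fun _ => a, by omega, le_rfl, show i + 1 ≤ a by omega,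
          fun k h1 h2 => absurd h2 (by omega), ?_⟩
        rw [Finset.Icc_self, Finset.sum_singleton]
        show n = a.choose (i + 1)
        omega
      · obtain ⟨j, f₀, hexp⟩ := ih hi1 (n - a.choose (i + 1)) (by omega)
        have hf₀i : f₀ i < a := by
          by_contra hcon
          push_neg at hcon
          have h1 : a.choose i ≤ (f₀ i).choose i := Nat.choose_le_choose _ hcon
          have h2 := exp_top_le (isMacExp_exp hexp)
          omega
        obtain ⟨hj1, hji, hjf, hmono, hsum⟩ := hexp
        refine ⟨j, fun k => if k = i + 1 then a else f₀ k, hj1, by omega, ?_, ?_, ?_⟩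
        · simp only [if_neg (by omega : ¬ j = i + 1)]
          exact hjf
        · intro k hk1 hk2
          show (if k = i + 1 then a else f₀ k) < (if k + 1 = i + 1 then a else f₀ (k + 1))
          by_cases hki : k = i
          · rw [if_neg (by omega : ¬ k = i + 1), if_pos (by omega : k + 1 = i + 1), hki]
            exact hf₀i
          · rw [if_neg (by omega : ¬ k = i + 1), if_neg (by omega : ¬ k + 1 = i + 1)]
            exact hmono k hk1 (by omega)
        · rw [Finset.sum_Icc_succ_top (by omega : j ≤ i + 1)]
          have hcongr : ∑ k ∈ Finset.Icc j i,
              ((if k = i + 1 then a else f₀ k).choose k) = ∑ k ∈ Finset.Icc j i, (f₀ k).choose k := by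
            apply Finset.sum_congr rfl
            intro k hk
            have := (Finset.mem_Icc.mp hk).2
            rw [if_neg (by omega)]
          rw [hcongr]
          show n = (∑ k ∈ Finset.Icc j i, (f₀ k).choose k)
            + (if i + 1 = i + 1 then a else f₀ (i + 1)).choose (i + 1)
          rw [if_pos rfl, ← hsum]
          omega

lemma sum_shift (j i : ℕ) (hj : 1 ≤ j) (F : ℕ → ℕ) :
    ∑ k ∈ Finset.Icc j (i + 1), F k = ∑ k ∈ Finset.Icc (j - 1) i, F (k + 1) := by
  have hmap : Finset.Icc j (i + 1) = (Finset.Icc (j - 1) i).map (addRightEmbedding 1) := by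
    rw [Finset.map_add_right_Icc]
    congr 1
    omega
  rw [hmap, Finset.sum_map]
  rfl

/-- The minimum `h`-vector built from a socle-vector `s` by `h_e = s_e` and
`h_i = ((h_{i+1})_(i+1))^{-1}_{-1} + s_i` is an O-sequence, i.e. it satisfies
Macaulay's growth bound `h_{d+1} ≤ ((h_d)_(d))^{+1}_{+1}`. -/
theorem stmt_12 (e : ℕ) (he : 1 ≤ e) (s h : ℕ → ℕ)
    (hs0 : s 0 = 0) (hse : 1 ≤ s e)
    (h0 : h 0 = 1) (hhe : h e = s e)
    (hrec : ∀ i, 1 ≤ i → i + 1 ≤ e → ∀ j f, IsMacExp (h (i + 1)) (i + 1) j f →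
      h i = macDown (i + 1) j f + s i) :
    ∀ d, 1 ≤ d → d + 1 ≤ e → ∀ j f, IsMacExp (h d) d j f →
      h (d + 1) ≤ macUp d j f := by
  have hpos : ∀ i, 1 ≤ i → i ≤ e → 1 ≤ h i := by
    have key : ∀ t i, i + t = e → 1 ≤ i → 1 ≤ h i := by
      intro t
      induction t with
      | zero =>
        intro i hi _
        have : i = e := by omega
        rw [this, hhe]; exact hse
      | succ t iht =>
        intro i hi hi1
        have hnext : 1 ≤ h (i + 1) := iht (i + 1) (by omega) (by omega)
        obtain ⟨j', f', hexp⟩ := exists_mac (i + 1) (by omega) _ hnext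
        have hd := hrec i hi1 (by omega) j' f' hexp
        have hm' := isMacExp_exp hexp
        have h1 : i + 1 ≤ f' (i + 1) := hm'.2.1 (i + 1) hm'.1 le_rfl
        have h2 : (f' (i + 1) - 1).choose (i + 1 - 1) ≤ macDown (i + 1) j' f' :=
          Finset.single_le_sum (f := fun k => (f' k - 1).choose (k - 1))
            (fun k _ => Nat.zero_le _) (Finset.mem_Icc.mpr ⟨hm'.1, le_rfl⟩)
        have hp : 0 < (f' (i + 1) - 1).choose (i + 1 - 1) := Nat.choose_pos (by omega)
        omega
    intro i hi1 hie
    exact key (e - i) i (by omega) hi1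
  intro d hd hde j f hexp
  have hn1 : 1 ≤ h (d + 1) := hpos (d + 1) (by omega) hde
  obtain ⟨j', f', hexp'⟩ := exists_mac (d + 1) (by omega) _ hn1
  have hd' := hrec d hd hde j' f' hexp'
  have hm' := isMacExp_exp hexp'
  have hj'1 : 1 ≤ j' := hexp'.1
  have hkf' : ∀ k, j' ≤ k → k ≤ d + 1 → k ≤ f' k := hm'.2.1
  set g : ℕ → ℕ := fun k => f' (k + 1) - 1 with hgdef
  have hgexp : MacExp' (macDown (d + 1) j' f') d (j' - 1) g := by
    refine ⟨by have := hm'.1; omega, ?_, ?_, ?_⟩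
    · intro k hk1 hk2
      have := hkf' (k + 1) (by omega) (by omega)
      simp only [hgdef]
      omega
    · intro k hk1 hk2
      have hh1 := hexp'.2.2.2.1 (k + 1) (by omega) (by omega)
      have hh2 := hkf' (k + 1) (by omega) (by omega)
      simp only [hgdef]
      omega
    · unfold macDown
      rw [sum_shift j' d hj'1]
      apply Finset.sum_congr rfl
      intro k hk
      simp [hgdef]
  have hupg : macUp d (j' - 1) g = h (d + 1) := by
    unfold macUp
    conv_rhs => rw [hexp'.2.2.2.2]
    rw [sum_shift j' d hj'1]
    apply Finset.sum_congr rfl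
    intro k hk
    have hk' := Finset.mem_Icc.mp hk
    have := hkf' (k + 1) (by omega) (by omega)
    simp only [hgdef]
    congr 2
    omega
  have hfinal := mono_up hgexp (isMacExp_exp hexp) hexp.1 (by omega)
  omega
end
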